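/- arXiv:1601.04979 — 5 statements merged into one kernel-verified Lean document; each statement's English description precedes it below -/
import Mathlib

section
/- For n ≥ 1, the gamma-polynomial of the q-analogue [n] = 1+q+...+q^{n-1} is F_{n-1}(1,-z): that is, [n]_q = Σ_{j≥0} (-1)^j·C(n-1-j, j)·q^j·(1+q)^{n-1-2j}. -/
/-!
Both `[m + 1]_x` and the binomial sum `∑ⱼ C(m - j, j) tʲ s^(m - 2j)` obey the Fibonacci recursion
`u (m + 2) = s u (m + 1) + t u m`: the binomial sum by Pascal's rule, the geometric sum with
`s = 1 + x`, `t = -x` because `(1 + x) [m + 2] - x [m + 1] = [m + 2] + x ^ (m + 2)`. Comparing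
initial values, both equal `F_m(1 + x, -x)`.
-/

open Finset Polynomial

section FibPoly

variable {R : Type*}

def fibPoly [CommSemiring R] (s t : R) : ℕ → R
  | 0 => 1
  | 1 => s
  | n + 2 => s * fibPoly s t (n + 1) + t * fibPoly s t n

theorem Nat.choose_succ_sub_succ (m j : ℕ) :
    (m + 1 - j).choose (j + 1) = (m - j).choose j + (m - j).choose (j + 1) := by
  rcases le_or_gt j m with h | h
  · rw [show m + 1 - j = m - j + 1 by omega, Nat.choose_succ_succ]
  · obtain ⟨k, rfl⟩ : ∃ k, j = k + 1 := ⟨j - 1, by omega⟩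
    simp [show m + 1 - (k + 1) = 0 by omega, show m - (k + 1) = 0 by omega]

/-- Under truncated subtraction the exponents differ by one only where the binomial
coefficient is nonzero. -/
theorem choose_mul_pow_sub_two_mul [CommSemiring R] (s : R) (m j : ℕ) :
    ((m - j).choose (j + 1) : R) * s ^ (m - 2 * j) =
      s * (((m - j).choose (j + 1) : R) * s ^ (m + 1 - 2 * (j + 1))) := by
  rcases lt_or_ge (m - j) (j + 1) with h | h
  · simp [Nat.choose_eq_zero_of_lt h]
  · rw [show m - 2 * j = m + 1 - 2 * (j + 1) + 1 by omega, pow_succ]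
    ring

theorem sum_choose_mul_pow_add_two [CommSemiring R] (s t : R) (m : ℕ) :
    ∑ j ∈ range (m + 3), ((m + 2 - j).choose j : R) * t ^ j * s ^ (m + 2 - 2 * j) =
      s * ∑ j ∈ range (m + 2), ((m + 1 - j).choose j : R) * t ^ j * s ^ (m + 1 - 2 * j) +
        t * ∑ j ∈ range (m + 1), ((m - j).choose j : R) * t ^ j * s ^ (m - 2 * j) := by
  have pascal : ∑ j ∈ range (m + 2),
      ((m + 2 - (j + 1)).choose (j + 1) : R) * t ^ (j + 1) * s ^ (m + 2 - 2 * (j + 1)) =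
      ∑ j ∈ range (m + 2), ((m - j).choose (j + 1) : R) * t ^ (j + 1) * s ^ (m - 2 * j) +
        ∑ j ∈ range (m + 2), ((m - j).choose j : R) * t ^ (j + 1) * s ^ (m - 2 * j) := by
    rw [← sum_add_distrib]
    refine sum_congr rfl fun j _ => ?_
    rw [show m + 2 - (j + 1) = m + 1 - j by omega, show m + 2 - 2 * (j + 1) = m - 2 * j by omega,
      Nat.choose_succ_sub_succ]
    push_cast
    ring
  have choose_succ_part :
      ∑ j ∈ range (m + 2), ((m - j).choose (j + 1) : R) * t ^ (j + 1) * s ^ (m - 2 * j) =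
      s * ∑ j ∈ range (m + 1),
        ((m + 1 - (j + 1)).choose (j + 1) : R) * t ^ (j + 1) * s ^ (m + 1 - 2 * (j + 1)) := by
    rw [sum_range_succ, mul_sum]
    simp only [show m - (m + 1) = 0 by omega, Nat.choose_zero_succ, Nat.cast_zero, zero_mul,
      add_zero, show ∀ j, m + 1 - (j + 1) = m - j by omega]
    refine sum_congr rfl fun j _ => ?_
    rw [mul_right_comm, choose_mul_pow_sub_two_mul]
    ring
  have choose_part : ∑ j ∈ range (m + 2), ((m - j).choose j : R) * t ^ (j + 1) * s ^ (m - 2 * j) =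
      t * ∑ j ∈ range (m + 1), ((m - j).choose j : R) * t ^ j * s ^ (m - 2 * j) := by
    rw [sum_range_succ, mul_sum]
    simp only [show m - (m + 1) = 0 by omega, Nat.choose_zero_succ, Nat.cast_zero, zero_mul,
      add_zero]
    refine sum_congr rfl fun j _ => ?_
    ring
  rw [sum_range_succ', pascal, choose_succ_part, choose_part, sum_range_succ' _ (m + 1)]
  simp only [Nat.choose_zero_right, Nat.cast_one, pow_zero, Nat.sub_zero, Nat.mul_zero]
  ring

theorem fibPoly_eq_sum_choose [CommSemiring R] (s t : R) (m : ℕ) :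
    fibPoly s t m = ∑ j ∈ range (m + 1), ((m - j).choose j : R) * t ^ j * s ^ (m - 2 * j) := by
  induction m using Nat.twoStepInduction with
  | zero => simp [fibPoly]
  | one => simp [fibPoly, sum_range_succ]
  | more m ih₀ ih₁ => rw [fibPoly, ih₀, ih₁, sum_choose_mul_pow_add_two]

theorem geom_sum_eq_fibPoly [CommRing R] (x : R) (m : ℕ) :
    ∑ i ∈ range (m + 1), x ^ i = fibPoly (1 + x) (-x) m := by
  induction m using Nat.twoStepInduction with
  | zero => simp [fibPoly]
  | one => simp [fibPoly, sum_range_succ]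
  | more m ih₀ ih₁ =>
    rw [fibPoly, ← ih₀, ← ih₁, sum_range_succ _ (m + 2), sum_range_succ _ (m + 1)]
    ring

end FibPoly

theorem gamma_polynomial_q_analogue_general (n : ℕ) :
    (∑ i ∈ Finset.range n, (X : Polynomial ℤ) ^ i) =
      ∑ j ∈ Finset.range n,
        C ((-1 : ℤ) ^ j * ((n - 1 - j).choose j : ℤ)) * X ^ j *
          (1 + X) ^ (n - 1 - 2 * j) := by
  rcases n with _ | m
  · simp
  rw [geom_sum_eq_fibPoly, fibPoly_eq_sum_choose, Nat.add_sub_cancel]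
  refine sum_congr rfl fun j _ => ?_
  simp only [neg_pow (X : ℤ[X]), map_mul, map_pow, map_neg, map_one, map_natCast]
  ring

/-- The gamma-polynomial of `[n]_q = 1 + q + ⋯ + q^{n-1}` is `F_{n-1}(1, -z)`:
`[n]_q = Σ_j (-1)^j C(n-1-j, j) q^j (1+q)^{n-1-2j}`. -/
theorem gamma_polynomial_q_analogue (n : ℕ) (hn : 1 ≤ n) :
    (∑ i ∈ Finset.range n, (X : Polynomial ℤ) ^ i) =
      ∑ j ∈ Finset.range n,
        C ((-1 : ℤ) ^ j * ((n - 1 - j).choose j : ℤ)) * X ^ j *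
          (1 + X) ^ (n - 1 - 2 * j) :=
  gamma_polynomial_q_analogue_general n
end

section
/- For n ≥ 1, 1 + q^n = Σ_{0≤2j≤n} (-1)^j·(n/(n-j))·C(n-j, j)·q^j·(1+q)^{n-2j}; i.e., the gamma-polynomial of 1+q^n is L_n(1,-z). -/
open Polynomial

private def lucasCoeff (n j : ℕ) : ℕ := n * (n - j).choose j / (n - j)

private lemma lucasCoeff_zero (n : ℕ) (h : 1 ≤ n) : lucasCoeff n 0 = 1 := by
  simp [lucasCoeff, Nat.div_self (by omega : 0 < n)]

private lemma lucasCoeff_big (n j : ℕ) (h : n < 2 * j) : lucasCoeff n j = 0 := by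
  have : (n - j).choose j = 0 := Nat.choose_eq_zero_of_lt (by omega)
  simp [lucasCoeff, this]

private lemma lucasCoeff_closed (n j : ℕ) (h1 : 1 ≤ j) (h2 : 2 * j ≤ n) :
    lucasCoeff n j = (n - j).choose j + (n - j - 1).choose (j - 1) := by
  have hnj : 1 ≤ n - j := by omega
  have key : (n - j) * (n - j - 1).choose (j - 1) = (n - j).choose j * j := by
    have := Nat.add_one_mul_choose_eq (n - j - 1) (j - 1)
    have e1 : n - j - 1 + 1 = n - j := by omega
    have e2 : j - 1 + 1 = j := by omega
    rwa [e1, e2] at this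
  have hd : n * (n - j).choose j =
      (n - j) * ((n - j).choose j + (n - j - 1).choose (j - 1)) := by
    have hn : n = (n - j) + j := by omega
    calc n * (n - j).choose j = (n - j) * (n - j).choose j + (n - j).choose j * j := by
          rw (occs := .pos [1]) [hn]; ring
      _ = (n - j) * ((n - j).choose j + (n - j - 1).choose (j - 1)) := by rw [← key]; ring
  rw [lucasCoeff, hd, Nat.mul_div_cancel_left _ (by omega : 0 < n - j)]

private lemma lucasCoeff_rec (m k : ℕ) :
    lucasCoeff (m + 3) (k + 1) = lucasCoeff (m + 2) (k + 1) + lucasCoeff (m + 1) k := by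
  rcases Nat.lt_or_ge (m + 3) (2 * (k + 1)) with h | h
  · rw [lucasCoeff_big (m + 3) (k + 1) (by omega), lucasCoeff_big (m + 2) (k + 1) (by omega),
      lucasCoeff_big (m + 1) k (by omega)]
  rcases Nat.lt_or_ge (m + 2) (2 * (k + 1)) with h2 | h2
  · -- 2(k+1) = m+3, so k ≥ 1
    have hk : 1 ≤ k := by omega
    rw [lucasCoeff_big (m + 2) (k + 1) (by omega)]
    rw [lucasCoeff_closed (m + 3) (k + 1) (by omega) h,
      lucasCoeff_closed (m + 1) k hk (by omega)]
    rw [show m + 3 - (k + 1) = k + 1 from by omega, show m + 1 - k = k from by omega]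
    simp [Nat.choose_self]
  -- 2(k+1) ≤ m+2
  rcases k with _ | j
  · rw [lucasCoeff_closed (m + 3) 1 (by omega) (by omega),
      lucasCoeff_closed (m + 2) 1 (by omega) (by omega), lucasCoeff_zero (m + 1) (by omega)]
    simp [Nat.choose_one_right]
  · have hm : 2 * j + 2 ≤ m := by omega
    rw [lucasCoeff_closed (m + 3) (j + 1 + 1) (by omega) (by omega),
      lucasCoeff_closed (m + 2) (j + 1 + 1) (by omega) (by omega),
      lucasCoeff_closed (m + 1) (j + 1) (by omega) (by omega)]
    simp only [show j + 1 + 1 = j + 2 from rfl,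
      show m + 3 - (j + 2) = m + 1 - j from by omega,
      show m + 1 - j - 1 = m - j from by omega,
      show j + 2 - 1 = j + 1 from by omega,
      show m + 2 - (j + 2) = m - j from by omega,
      show m + 2 - (j + 2) - 1 = m - j - 1 from by omega,
      show m + 1 - (j + 1) = m - j from by omega,
      show m + 1 - (j + 1) - 1 = m - j - 1 from by omega,
      show j + 1 - 1 = j from by omega]
    have p1 : (m + 1 - j).choose (j + 2) = (m - j).choose (j + 1) + (m - j).choose (j + 2) := by
      rw [show m + 1 - j = (m - j) + 1 from by omega]
      rw [Nat.choose_succ_succ]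
    have p2 : (m - j).choose (j + 1) = (m - j - 1).choose j + (m - j - 1).choose (j + 1) := by
      rw (occs := .pos [1]) [show m - j = (m - j - 1) + 1 from by omega]
      rw [Nat.choose_succ_succ]
    omega

private noncomputable def lucasTerm (n j : ℕ) : Polynomial ℤ :=
  C ((-1 : ℤ) ^ j * (lucasCoeff n j : ℤ)) * X ^ j * (1 + X) ^ (n - 2 * j)

private lemma lucasTerm_big (n j : ℕ) (h : n < 2 * j) : lucasTerm n j = 0 := by
  simp [lucasTerm, lucasCoeff_big n j h]

private lemma lucas_aux : ∀ n : ℕ, 1 ≤ n →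
    (1 + (X : Polynomial ℤ) ^ n) = ∑ j ∈ Finset.range (n + 1), lucasTerm n j := by
  intro n
  induction n using Nat.strong_induction_on with
  | _ n ih =>
    match n with
    | 0 => intro h; exact absurd h (by norm_num)
    | 1 =>
      intro _
      rw [Finset.sum_range_succ, Finset.sum_range_one]
      rw [lucasTerm_big 1 1 (by omega)]
      simp [lucasTerm, lucasCoeff]
    | 2 =>
      intro _
      rw [Finset.sum_range_succ, Finset.sum_range_succ, Finset.sum_range_one]
      rw [lucasTerm_big 2 2 (by omega)]
      simp only [lucasTerm, lucasCoeff]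
      norm_num
      ring
    | (m + 3) =>
      intro _
      have h1 := ih (m + 2) (by omega) (by omega)
      have h2 := ih (m + 1) (by omega) (by omega)
      have e1 : (1 : Polynomial ℤ) + X ^ (m + 3) =
          (1 + X) * (1 + X ^ (m + 2)) - X * (1 + X ^ (m + 1)) := by ring
      rw [e1, h1, h2, Finset.mul_sum, Finset.mul_sum]
      have pad1 : ∑ j ∈ Finset.range (m + 3), (1 + X) * lucasTerm (m + 2) j =
          ∑ j ∈ Finset.range (m + 4), (1 + X) * lucasTerm (m + 2) j := by
        rw [Finset.sum_range_succ (n := m + 3), lucasTerm_big (m + 2) (m + 3) (by omega)]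
        ring
      have pad2 : ∑ j ∈ Finset.range (m + 2), X * lucasTerm (m + 1) j =
          ∑ j ∈ Finset.range (m + 3), X * lucasTerm (m + 1) j := by
        rw [Finset.sum_range_succ (n := m + 2), lucasTerm_big (m + 1) (m + 2) (by omega)]
        ring
      rw [pad1, pad2]
      rw [Finset.sum_range_succ' (fun j => (1 + X) * lucasTerm (m + 2) j) (m + 3),
        Finset.sum_range_succ' (fun j => lucasTerm (m + 3) j) (m + 3)]
      have head : lucasTerm (m + 3) 0 = (1 + X) * lucasTerm (m + 2) 0 := by
        simp only [lucasTerm, lucasCoeff_zero (m + 3) (by omega),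
          lucasCoeff_zero (m + 2) (by omega), Nat.mul_zero, Nat.sub_zero]
        push_cast
        rw [show m + 3 = (m + 2) + 1 from rfl, pow_succ]
        ring
      have body : ∀ j ∈ Finset.range (m + 3), lucasTerm (m + 3) (j + 1) =
          (1 + X) * lucasTerm (m + 2) (j + 1) - X * lucasTerm (m + 1) j := by
        intro j _
        have hrec := lucasCoeff_rec m j
        have hexp : m + 3 - 2 * (j + 1) = m + 1 - 2 * j := by omega
        by_cases hj : 2 * (j + 1) ≤ m + 2
        · have hexp2 : m + 2 - 2 * (j + 1) + 1 = m + 1 - 2 * j := by omega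
          simp only [lucasTerm, hrec, hexp]
          push_cast
          simp only [mul_add, map_add, map_mul, map_pow, map_neg, map_one, map_natCast]
          rw [← hexp2, pow_succ]
          ring
        · rw [lucasTerm_big (m + 2) (j + 1) (by omega)]
          have hz : lucasCoeff (m + 2) (j + 1) = 0 := lucasCoeff_big (m + 2) (j + 1) (by omega)
          rw [hz] at hrec
          simp only [lucasTerm, hrec, hexp, Nat.zero_add]
          simp only [mul_add, map_add, map_mul, map_pow, map_neg, map_one, map_natCast]
          ring
      rw [Finset.sum_congr rfl body, head]
      rw [Finset.sum_sub_distrib]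
      ring

/-- The gamma-polynomial of `1 + q^n` is `L_n(1, -z)`:
`1 + q^n = Σ_{0 ≤ 2j ≤ n} (-1)^j (n/(n-j)) C(n-j, j) q^j (1+q)^{n-2j}`. -/
theorem gamma_polynomial_one_add_qn (n : ℕ) (hn : 1 ≤ n) :
    (1 + (X : Polynomial ℤ) ^ n) =
      ∑ j ∈ Finset.range (n / 2 + 1),
        C ((-1 : ℤ) ^ j * ((n * (n - j).choose j / (n - j) : ℕ) : ℤ)) * X ^ j *
          (1 + X) ^ (n - 2 * j) := by
  rw [lucas_aux n hn]
  symm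
  apply Finset.sum_subset
  · intro j hj
    simp only [Finset.mem_range] at *
    omega
  · intro j _ hj
    simp only [Finset.mem_range, not_lt] at hj
    exact lucasTerm_big n j (by omega)
end

section
/- The matrix B_d with entries B_d(i,j) = C(d-2j, i-j) - C(d-2j, i-j-1) for 0 ≤ i,j ≤ ⌊d/2⌋ is the change-of-basis matrix from the basis {q^j(1+q)^{d-2j}} to the basis {q^i+q^{i+1}+...+q^{d-i}}: that is, q^j(1+q)^{d-2j} = Σ_{i=j}^{⌊d/2⌋} B_d(i,j)·(q^i + q^{i+1} + ... + q^{d-i}). -/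
open Polynomial

/-- Telescoping sum: `Σ_{r=0}^{k} (C(m,r) - C(m,r-1)) = C(m,k)` (with `C(m,-1) = 0`). -/
lemma gamma_to_g_telescope (m k : ℕ) :
    ∑ r ∈ Finset.range (k+1),
      (((m.choose r : ℤ)) - if r = 0 then 0 else (m.choose (r-1) : ℤ)) = m.choose k := by
  induction k with
  | zero => simp
  | succ k ih => rw [Finset.sum_range_succ, ih]; simp

/-- The `j = 0` case: `(1+X)^m = Σ_r (C(m,r) - C(m,r-1)) (X^r + ⋯ + X^{m-r})`. -/
lemma gamma_to_g_key (m : ℕ) :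
    ((1 : Polynomial ℤ) + X) ^ m =
      ∑ r ∈ Finset.range (m / 2 + 1),
        (((m.choose r : ℤ)) - if r = 0 then 0 else (m.choose (r-1) : ℤ)) •
          ∑ t ∈ Finset.Icc r (m - r), (X : Polynomial ℤ) ^ t := by
  set c : ℕ → ℤ := fun r => ((m.choose r : ℤ)) - if r = 0 then 0 else (m.choose (r-1) : ℤ) with hc
  calc ((1 : Polynomial ℤ) + X) ^ m
      = ∑ t ∈ Finset.range (m + 1), (m.choose t : ℤ) • (X : Polynomial ℤ) ^ t := by
        rw [add_comm, add_pow]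
        refine Finset.sum_congr rfl fun t ht => ?_
        simp [zsmul_eq_mul]
        ring
    _ = ∑ t ∈ Finset.range (m + 1),
          (∑ r ∈ Finset.range (m / 2 + 1), if r ≤ t ∧ t ≤ m - r then c r else 0) •
            (X : Polynomial ℤ) ^ t := by
        refine Finset.sum_congr rfl fun t ht => ?_
        congr 1
        have ht' : t ≤ m := Nat.lt_succ_iff.mp (Finset.mem_range.mp ht)
        rw [Finset.sum_ite, Finset.sum_const_zero, add_zero]
        have : Finset.filter (fun r => r ≤ t ∧ t ≤ m - r) (Finset.range (m / 2 + 1))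
            = Finset.range (min t (m - t) + 1) := by
          ext r; simp only [Finset.mem_filter, Finset.mem_range]; omega
        rw [this, gamma_to_g_telescope]
        rcases le_or_gt t (m - t) with h | h
        · rw [min_eq_left h]
        · rw [min_eq_right h.le]
          have : m - t ≤ m := Nat.sub_le m t
          rw [Nat.choose_symm ht']
    _ = ∑ t ∈ Finset.range (m + 1), ∑ r ∈ Finset.range (m / 2 + 1),
          (if r ≤ t ∧ t ≤ m - r then c r else 0) • (X : Polynomial ℤ) ^ t := by
        refine Finset.sum_congr rfl fun t ht => ?_
        rw [Finset.sum_smul]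
    _ = ∑ r ∈ Finset.range (m / 2 + 1), ∑ t ∈ Finset.range (m + 1),
          (if r ≤ t ∧ t ≤ m - r then c r else 0) • (X : Polynomial ℤ) ^ t := Finset.sum_comm
    _ = ∑ r ∈ Finset.range (m / 2 + 1), c r • ∑ t ∈ Finset.Icc r (m - r), (X : Polynomial ℤ) ^ t := by
        refine Finset.sum_congr rfl fun r hr => ?_
        have hr' : r ≤ m / 2 := Nat.lt_succ_iff.mp (Finset.mem_range.mp hr)
        rw [Finset.smul_sum]
        have : Finset.Icc r (m - r)
            = Finset.filter (fun t => r ≤ t ∧ t ≤ m - r) (Finset.range (m+1)) := by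
          ext t; simp only [Finset.mem_filter, Finset.mem_range, Finset.mem_Icc]; omega
        rw [this, Finset.sum_filter]
        refine Finset.sum_congr rfl fun t ht => ?_
        split <;> simp

/-- Change of basis from the gamma basis to the `g` basis:
`q^j (1+q)^{d-2j} = Σ_{i=j}^{⌊d/2⌋} (C(d-2j, i-j) - C(d-2j, i-j-1)) (q^i + ⋯ + q^{d-i})`,
with the convention `C(m, -1) = 0` (here written via `r = i - j`). -/
theorem gamma_to_g_change_of_basis (d j : ℕ) (hj : 2 * j ≤ d) :
    (X : Polynomial ℤ) ^ j * (1 + X) ^ (d - 2 * j) =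
      ∑ r ∈ Finset.range (d / 2 + 1 - j),
        (((d - 2 * j).choose r : ℤ) -
            if r = 0 then 0 else ((d - 2 * j).choose (r - 1) : ℤ)) •
          ∑ t ∈ Finset.Icc (j + r) (d - (j + r)), (X : Polynomial ℤ) ^ t := by
  set m := d - 2 * j with hm
  have hrange : d / 2 + 1 - j = m / 2 + 1 := by omega
  rw [hrange, gamma_to_g_key m, Finset.mul_sum]
  refine Finset.sum_congr rfl fun r hr => ?_
  have hr' : r ≤ m / 2 := Nat.lt_succ_iff.mp (Finset.mem_range.mp hr)
  rw [mul_smul_comm]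
  congr 1
  have h1 : d - (j + r) = j + (m - r) := by omega
  rw [h1, ← Finset.map_add_left_Icc, Finset.sum_map, Finset.mul_sum]
  refine Finset.sum_congr rfl fun s hs => ?_
  simp [pow_add]
end

section
/- The number of ballot paths of length m with exactly r North steps (lattice paths from (0,0) using East and North steps such that no prefix has more North than East steps) equals C(m, r) - C(m, r-1), provided 2r ≤ m. -/
/-!
Sort the ballot paths of length `m + 1` with `r + 1` North steps by their last step. Deleting
it is a bijection onto the ballot paths of length `m` with `r + 1` or with `r` North steps (a
final North step is always admissible when `2 (r + 1) ≤ m + 1`), so the counts satisfy Pascal's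
recurrence, and so does `C(m, r + 1) - C(m, r)`. The induction carries the range
`2 (r + 1) ≤ m + 1`: at its boundary `m = 2r + 1` there are no ballot paths, and
`C(2r + 1, r + 1) = C(2r + 1, r)`.
-/

open Finset

namespace Ballot

-- `true` is a North step, `false` an East step.
def IsBallot (l : List Bool) : Prop :=
  ∀ s, (l.take s).count true ≤ (l.take s).count false

open Classical in
noncomputable def ballotPaths (m r : ℕ) : Finset (List Bool) :=
  {l ∈ (univ : Finset (Fin m → Bool)).image List.ofFn | l.count true = r ∧ IsBallot l}

theorem mem_ballotPaths {m r : ℕ} {l : List Bool} :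
    l ∈ ballotPaths m r ↔ l.length = m ∧ l.count true = r ∧ IsBallot l := by
  simp only [ballotPaths, mem_filter, mem_image, mem_univ, true_and]
  constructor
  · rintro ⟨⟨f, rfl⟩, h⟩
    exact ⟨List.length_ofFn, h⟩
  · rintro ⟨rfl, h⟩
    exact ⟨⟨l.get, List.ofFn_get l⟩, h⟩

theorem IsBallot.count_le {l : List Bool} (hl : IsBallot l) : l.count true ≤ l.count false := by
  simpa using hl l.length

theorem isBallot_concat {l : List Bool} {b : Bool} :
    IsBallot (l ++ [b]) ↔ IsBallot l ∧ (l ++ [b]).count true ≤ (l ++ [b]).count false := by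
  refine ⟨fun h => ⟨fun s => ?_, h.count_le⟩, fun ⟨hl, hlast⟩ s => ?_⟩
  · rcases le_or_gt s l.length with hs | hs
    · simpa [List.take_append_of_le_length hs] using h s
    · simpa [List.take_of_length_le hs.le] using h l.length
  · rcases le_or_gt s l.length with hs | hs
    · simpa [List.take_append_of_le_length hs] using hl s
    · rwa [List.take_of_length_le (by simp; omega)]

theorem ballotPaths_zero (m : ℕ) : ballotPaths m 0 = {List.replicate m false} := by
  ext l
  rw [mem_singleton]
  constructor
  · intro hl
    obtain ⟨rfl, htrue, -⟩ := mem_ballotPaths.1 hl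
    rw [List.count_eq_zero] at htrue
    exact List.eq_replicate_iff.2 ⟨rfl, fun b hb => by cases b; rfl; exact absurd hb htrue⟩
  · rintro rfl
    simp [mem_ballotPaths, IsBallot, List.take_replicate, List.count_replicate]

theorem ballotPaths_eq_empty {m r : ℕ} (h : m < 2 * r) : ballotPaths m r = ∅ := by
  refine eq_empty_of_forall_notMem fun l hl => ?_
  obtain ⟨rfl, rfl, hb⟩ := mem_ballotPaths.1 hl
  have := l.count_true_add_count_false
  have := hb.count_le
  omega

theorem concat_false_mem_ballotPaths {m r : ℕ} {l : List Bool} :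
    l ++ [false] ∈ ballotPaths (m + 1) r ↔ l ∈ ballotPaths m r := by
  simp only [mem_ballotPaths, isBallot_concat, List.length_append, List.length_singleton,
    List.count_append, List.count_singleton_self, List.count_singleton, beq_true,
    Bool.false_eq_true, reduceIte, add_zero, Nat.add_right_cancel_iff]
  exact ⟨fun ⟨hm, hr, hl, _⟩ => ⟨hm, hr, hl⟩,
    fun ⟨hm, hr, hl⟩ => ⟨hm, hr, hl, hl.count_le.trans (Nat.le_succ _)⟩⟩

theorem concat_true_mem_ballotPaths {m r : ℕ} {l : List Bool} (h : 2 * r < m) :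
    l ++ [true] ∈ ballotPaths (m + 1) (r + 1) ↔ l ∈ ballotPaths m r := by
  simp only [mem_ballotPaths, isBallot_concat, List.length_append, List.length_singleton,
    List.count_append, List.count_singleton_self, List.count_singleton, beq_false,
    Bool.not_true, Bool.false_eq_true, reduceIte, add_zero, Nat.add_right_cancel_iff]
  refine ⟨fun ⟨hm, hr, hl, _⟩ => ⟨hm, hr, hl⟩, fun ⟨hm, hr, hl⟩ => ⟨hm, hr, hl, ?_⟩⟩
  have := l.count_true_add_count_false
  omega

theorem ballotPaths_succ_succ {m r : ℕ} (h : 2 * r < m) :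
    ballotPaths (m + 1) (r + 1) =
      (ballotPaths m (r + 1)).map ⟨(· ++ [false]), List.append_left_injective _⟩ ∪
        (ballotPaths m r).map ⟨(· ++ [true]), List.append_left_injective _⟩ := by
  ext l
  rcases l.eq_nil_or_concat' with rfl | ⟨l, b, rfl⟩
  · simp [mem_ballotPaths]
  · cases b <;> simp [concat_false_mem_ballotPaths, concat_true_mem_ballotPaths h]

theorem card_ballotPaths_succ_add_choose {m r : ℕ} (h : 2 * (r + 1) ≤ m + 1) :
    #(ballotPaths m (r + 1)) + m.choose r = m.choose (r + 1) := by
  induction m generalizing r with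
  | zero => omega
  | succ m ih =>
    rcases h.eq_or_lt with h | h
    · obtain rfl : m = 2 * r := by omega
      rw [ballotPaths_eq_empty (by omega), card_empty, zero_add, Nat.choose_symm_half]
    · rw [ballotPaths_succ_succ (by omega), card_union_of_disjoint ?_, card_map, card_map,
        Nat.choose_succ_succ' m r]
      · have ih_r := ih (r := r) (by omega)
        cases r with
        | zero =>
          simp only [ballotPaths_zero, card_singleton, Nat.choose_zero_right] at ih_r ⊢
          omega
        | succ k =>
          have ih_k := ih (r := k) (by omega)
          rw [Nat.choose_succ_succ' m k]
          omega
      · simp [disjoint_left]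

end Ballot

open Ballot in
/-- The number of ballot paths of length `m` with `r` North steps (words in `{N, E}`,
`N =` `true`, every prefix having at least as many `E`'s as `N`'s) is
`C(m, r) - C(m, r-1)` (with `C(m, -1) = 0`), provided `2r ≤ m`. -/
theorem ballot_path_count (m r : ℕ) (hr : 2 * r ≤ m) :
    Nat.card {l : List Bool // l.length = m ∧ l.count true = r ∧
        ∀ s, (l.take s).count true ≤ (l.take s).count false} =
      m.choose r - if r = 0 then 0 else m.choose (r - 1) := by
  refine (Nat.subtype_card _ fun _ => mem_ballotPaths).trans ?_
  cases r with
  | zero => simp [ballotPaths_zero]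
  | succ r =>
    have := card_ballotPaths_succ_add_choose (m := m) (r := r) (by omega)
    simp only [Nat.add_one_ne_zero, reduceIte, Nat.add_sub_cancel]
    omega
end

section
/- For n ≥ 3, the number of matchings of the cycle graph on n vertices with exactly k edges is (n/(n-k))·C(n-k, k), for 0 ≤ 2k ≤ n. -/
/-!
Numbering the edges of `C_n` by their first endpoint, `{i, i + 1} ↦ i`, identifies the
`k`-matchings of `C_n` (`n ≥ 3`) with the `k`-subsets of `ℤ/n` containing no two cyclically
consecutive elements. Splitting on whether `0` is chosen reduces these to subsets of intervals
with no two consecutive elements; splitting on the least element of `[a, b)` gives Pascal's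
recursion for the number `C(b - a + 1 - k, k)` of such `k`-subsets of `[a, b)`. So the cyclic
count is `C(n - k, k) + C(n - k - 1, k - 1) = n / (n - k) · C(n - k, k)`.
-/

open Finset SimpleGraph

def sparseSubsets (s : Finset ℕ) (k : ℕ) : Finset (Finset ℕ) :=
  {S ∈ powersetCard k s | ∀ i ∈ S, i + 1 ∉ S}

theorem mem_sparseSubsets {s S : Finset ℕ} {k : ℕ} :
    S ∈ sparseSubsets s k ↔ S ⊆ s ∧ #S = k ∧ ∀ i ∈ S, i + 1 ∉ S := by
  simp [sparseSubsets, and_assoc]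

theorem sparseSubsets_zero (s : Finset ℕ) : sparseSubsets s 0 = {∅} := by
  simp [sparseSubsets]

theorem filter_notMem_sparseSubsets (s : Finset ℕ) (k x : ℕ) :
    {S ∈ sparseSubsets s k | x ∉ S} = sparseSubsets (s.erase x) k := by
  ext S
  simp only [mem_filter, mem_sparseSubsets, subset_erase]
  tauto

theorem card_filter_mem_sparseSubsets_Ico {a b : ℕ} (hab : a < b) (k : ℕ) :
    #{S ∈ sparseSubsets (Ico a b) (k + 1) | a ∈ S} = #(sparseSubsets (Ico (a + 2) b) k) := by
  refine card_nbij' (·.erase a) (insert a) ?_ ?_ ?_ ?_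
  · intro S
    simp only [coe_filter, Set.mem_ofPred_eq, mem_coe, mem_sparseSubsets, subset_iff, mem_Ico,
      mem_erase]
    rintro ⟨⟨hS, hcard, hsp⟩, ha⟩
    refine ⟨fun i hi => ?_, by rw [card_erase_of_mem ha, hcard]; rfl,
      fun i hi h => hsp i hi.2 h.2⟩
    have := hS hi.2
    have : i ≠ a + 1 := by rintro rfl; exact hsp a ha hi.2
    omega
  · intro T
    simp only [coe_filter, Set.mem_ofPred_eq, mem_coe, mem_sparseSubsets, subset_iff, mem_Ico,
      mem_insert]
    rintro ⟨hT, hcard, hsp⟩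
    have haT : a ∉ T := fun h => by have := hT h; omega
    refine ⟨⟨?_, by rw [card_insert_of_notMem haT, hcard], ?_⟩, by simp⟩
    · rintro i (rfl | hi)
      · omega
      · have := hT hi; omega
    · rintro i (rfl | hi) (h | h)
      · omega
      · have := hT h; omega
      · have := hT hi; omega
      · exact hsp i hi h
  · intro S hS
    exact insert_erase (mem_filter.mp hS).2
  · intro T hT
    exact erase_insert fun h => by have := (mem_sparseSubsets.mp hT).1 h; simp at this

theorem card_sparseSubsets_Ico_succ {a b : ℕ} (hab : a < b) (k : ℕ) :
    #(sparseSubsets (Ico a b) (k + 1)) =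
      #(sparseSubsets (Ico (a + 1) b) (k + 1)) + #(sparseSubsets (Ico (a + 2) b) k) := by
  rw [← card_filter_add_card_filter_not (s := sparseSubsets _ _) (a ∈ ·),
    filter_notMem_sparseSubsets, ← Nat.Ico_succ_left_eq_erase_Ico,
    card_filter_mem_sparseSubsets_Ico hab, add_comm]

theorem card_sparseSubsets_Ico (a b k : ℕ) :
    #(sparseSubsets (Ico a b) k) = (b + 1 - a - k).choose k := by
  induction hd : b - a using Nat.strong_induction_on generalizing a k with
  | _ d ih =>
  rcases k with _ | k
  · simp [sparseSubsets_zero]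
  rcases lt_or_ge a b with hab | hba
  · rw [card_sparseSubsets_Ico_succ hab, ih _ (by omega) (a + 1) _ rfl,
      ih _ (by omega) (a + 2) _ rfl]
    rcases le_or_gt (k + 1) d with h | h
    · rw [show b + 1 - a - (k + 1) = (d - k - 1) + 1 by omega,
        show b + 1 - (a + 1) - (k + 1) = d - k - 1 by omega,
        show b + 1 - (a + 2) - k = d - k - 1 by omega, Nat.choose_succ_succ', add_comm]
    · rw [Nat.choose_eq_zero_of_lt (by omega), Nat.choose_eq_zero_of_lt (by omega),
        Nat.choose_eq_zero_of_lt (by omega)]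
  · rw [Nat.choose_eq_zero_of_lt (by omega), card_eq_zero, sparseSubsets, Ico_eq_empty_of_le hba]
    simp

def cyclicSparseSubsets (n k : ℕ) : Finset (Finset ℕ) :=
  {S ∈ powersetCard k (range n) | ∀ i ∈ S, (i + 1) % n ∉ S}

theorem mem_cyclicSparseSubsets {n k : ℕ} {S : Finset ℕ} :
    S ∈ cyclicSparseSubsets n k ↔ S ∈ sparseSubsets (range n) k ∧ (0 ∈ S → n - 1 ∉ S) := by
  simp only [cyclicSparseSubsets, mem_filter, mem_powersetCard, mem_sparseSubsets]
  constructor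
  · rintro ⟨⟨hS, rfl⟩, hsp⟩
    refine ⟨⟨hS, rfl, fun i hi h => ?_⟩, fun h0 hn => ?_⟩
    · exact hsp i hi (by rwa [Nat.mod_eq_of_lt (mem_range.mp (hS h))])
    · have := mem_range.mp (hS hn)
      exact hsp _ hn (by rwa [Nat.sub_add_cancel (by omega), Nat.mod_self])
  · rintro ⟨⟨hS, rfl, hsp⟩, hwrap⟩
    refine ⟨⟨hS, rfl⟩, fun i hi h => ?_⟩
    have := mem_range.mp (hS hi)
    rcases Nat.lt_or_ge (i + 1) n with hlt | hge
    · exact hsp i hi (by rwa [Nat.mod_eq_of_lt hlt] at h)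
    · rw [show i + 1 = n by omega, Nat.mod_self] at h
      exact hwrap h (by rwa [show n - 1 = i by omega])

theorem card_cyclicSparseSubsets_succ {n : ℕ} (hn : 2 ≤ n) (k : ℕ) :
    #(cyclicSparseSubsets n (k + 1)) =
      #(sparseSubsets (Ico 1 n) (k + 1)) + #(sparseSubsets (Ico 2 (n - 1)) k) := by
  have hfree : {S ∈ cyclicSparseSubsets n (k + 1) | 0 ∉ S} = sparseSubsets (Ico 1 n) (k + 1) := by
    rw [Nat.Ico_succ_left_eq_erase_Ico, ← filter_notMem_sparseSubsets, ← range_eq_Ico]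
    ext S
    simp only [mem_filter, mem_cyclicSparseSubsets]
    tauto
  have hwrap : {S ∈ cyclicSparseSubsets n (k + 1) | 0 ∈ S} =
      {S ∈ sparseSubsets (Ico 0 (n - 1)) (k + 1) | 0 ∈ S} := by
    have hlast : (range n).erase (n - 1) = Ico 0 (n - 1) := by ext; simp; omega
    rw [← hlast, ← filter_notMem_sparseSubsets]
    ext S
    simp only [mem_filter, mem_cyclicSparseSubsets]
    tauto
  rw [← card_filter_add_card_filter_not (s := cyclicSparseSubsets _ _) (0 ∈ ·), hfree, hwrap,
    card_filter_mem_sparseSubsets_Ico (by omega), add_comm]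

theorem card_cyclicSparseSubsets {n : ℕ} (hn : 2 ≤ n) (k : ℕ) :
    #(cyclicSparseSubsets n k) = n * (n - k).choose k / (n - k) := by
  rcases k with _ | k
  · simp [cyclicSparseSubsets, filter_singleton, Nat.div_self (by omega : 0 < n)]
  rw [card_cyclicSparseSubsets_succ hn, card_sparseSubsets_Ico, card_sparseSubsets_Ico]
  rcases le_or_gt n (k + 1) with h | h
  · -- both sides vanish, the right one through `x / 0 = 0`
    rw [Nat.sub_eq_zero_of_le h, Nat.div_zero, Nat.choose_eq_zero_of_lt (by omega),
      Nat.choose_eq_zero_of_lt (by omega)]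
  obtain ⟨m, rfl⟩ : ∃ m, n = m + k + 2 := ⟨n - k - 2, by omega⟩
  rw [show m + k + 2 + 1 - 1 - (k + 1) = m + 1 by omega,
    show m + k + 2 - 1 + 1 - 2 - k = m by omega, show m + k + 2 - (k + 1) = m + 1 by omega]
  refine (Nat.div_eq_of_eq_mul_left (by omega) ?_).symm
  linear_combination (Nat.add_one_mul_choose_eq m k).symm

theorem Fin.val_add_one_eq_mod {n : ℕ} [NeZero n] (i : Fin n) :
    ((i + 1 : Fin n) : ℕ) = (i + 1) % n := by
  rw [Fin.val_add, Fin.val_one', Nat.add_mod_mod]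

theorem card_finset_fin_eq_card_cyclicSparseSubsets (n k : ℕ) [NeZero n] :
    #{S : Finset (Fin n) | #S = k ∧ ∀ i ∈ S, i + 1 ∉ S} = #(cyclicSparseSubsets n k) := by
  have hrange : range n = (univ : Finset (Fin n)).map Fin.valEmbedding := by
    rw [Fin.map_valEmbedding_univ, Nat.Iio_eq_range]
  have hsucc (S : Finset (Fin n)) :
      (∀ i ∈ S.map Fin.valEmbedding, (i + 1) % n ∉ S.map Fin.valEmbedding) ↔
        ∀ i ∈ S, i + 1 ∉ S := by
    simp [← Fin.val_add_one_eq_mod, ← Fin.ext_iff]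
  refine card_nbij (·.map Fin.valEmbedding) ?_ (Finset.map_injective _).injOn ?_
  · intro S hS
    simp only [coe_filter, mem_univ, true_and, Set.mem_ofPred_eq, cyclicSparseSubsets,
      mem_powersetCard, hrange] at hS ⊢
    obtain ⟨rfl, hsp⟩ := hS
    exact ⟨⟨map_subset_map.2 (subset_univ S), card_map _⟩, (hsucc S).2 hsp⟩
  · intro T hT
    simp only [coe_filter, mem_univ, true_and, Set.mem_ofPred_eq, cyclicSparseSubsets,
      mem_powersetCard, hrange, subset_map_iff] at hT ⊢
    obtain ⟨⟨⟨S, -, rfl⟩, rfl⟩, hsp⟩ := hT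
    exact ⟨S, ⟨(card_map _).symm, (hsucc S).1 hsp⟩, rfl⟩

section CycleGraph

variable {m : ℕ}

def cycleEdge (m : ℕ) : Fin (m + 3) ↪ Sym2 (Fin (m + 3)) where
  toFun i := s(i, i + 1)
  inj' i j h := by
    rcases Sym2.eq_iff.mp h with ⟨hij, -⟩ | ⟨rfl, hji⟩
    · exact hij
    · -- `j + 1 + 1 = j` would make `2 = 0` in `Fin (m + 3)`
      rw [add_assoc, add_eq_left] at hji
      simp [Fin.ext_iff, Fin.val_add, Nat.mod_eq_of_lt (show 2 < m + 3 by omega)] at hji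

@[simp]
theorem cycleEdge_apply (i : Fin (m + 3)) : cycleEdge m i = s(i, i + 1) := rfl

theorem range_cycleEdge : Set.range (cycleEdge m) = (cycleGraph (m + 3)).edgeSet := by
  ext e
  induction e using Sym2.ind with
  | _ u v =>
  simp only [Set.mem_range, mem_edgeSet, cycleGraph_adj, sub_eq_iff_eq_add', cycleEdge_apply,
    Sym2.eq_iff]
  constructor
  · rintro ⟨i, ⟨rfl, rfl⟩ | ⟨rfl, rfl⟩⟩ <;> simp
  · rintro (rfl | rfl)
    · exact ⟨v, Or.inr ⟨rfl, rfl⟩⟩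
    · exact ⟨u, Or.inl ⟨rfl, rfl⟩⟩

theorem pairwise_disjoint_map_cycleEdge_iff (S : Finset (Fin (m + 3))) :
    (∀ e ∈ S.map (cycleEdge m), ∀ f ∈ S.map (cycleEdge m), e ≠ f → ∀ v, v ∈ e → v ∉ f) ↔
      ∀ i ∈ S, i + 1 ∉ S := by
  simp only [forall_mem_map, (cycleEdge m).injective.ne_iff]
  simp only [cycleEdge_apply, Sym2.mem_iff]
  constructor
  · intro h i hi hi1
    exact h i hi (i + 1) hi1 (by simp) (i + 1) (Or.inr rfl) (Or.inl rfl)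
  · rintro h i hi j hj hij v (rfl | rfl) (hv | hv)
    · exact hij hv
    · exact h j hj (hv ▸ hi)
    · exact h i hi (hv ▸ hj)
    · exact hij (add_right_cancel hv)

theorem card_matchings_cycleGraph (m k : ℕ) :
    Nat.card {s : Finset (Sym2 (Fin (m + 3))) //
        (∀ e ∈ s, e ∈ (cycleGraph (m + 3)).edgeSet) ∧
        (∀ e ∈ s, ∀ f ∈ s, e ≠ f → ∀ v, v ∈ e → v ∉ f) ∧ s.card = k} =
      #{S : Finset (Fin (m + 3)) | #S = k ∧ ∀ i ∈ S, i + 1 ∉ S} := by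
  rw [Nat.card_eq_fintype_card, Fintype.card_subtype]
  symm
  refine card_nbij (·.map (cycleEdge m)) ?_ (Finset.map_injective _).injOn ?_
  · intro S hS
    simp only [coe_filter, mem_univ, true_and, Set.mem_ofPred_eq] at hS ⊢
    obtain ⟨rfl, hsp⟩ := hS
    refine ⟨fun e he => ?_, (pairwise_disjoint_map_cycleEdge_iff S).2 hsp, card_map _⟩
    obtain ⟨i, -, rfl⟩ := mem_map.1 he
    exact range_cycleEdge ▸ Set.mem_range_self i
  · intro M hM
    simp only [coe_filter, mem_univ, true_and, Set.mem_ofPred_eq] at hM ⊢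
    obtain ⟨hedge, hdisj, rfl⟩ := hM
    have hM : M ⊆ univ.map (cycleEdge m) := fun e he => by
      obtain ⟨i, rfl⟩ := (range_cycleEdge ▸ hedge e he : e ∈ Set.range (cycleEdge m))
      exact mem_map_of_mem _ (mem_univ i)
    obtain ⟨S, -, rfl⟩ := subset_map_iff.1 hM
    exact ⟨S, ⟨(card_map _).symm, (pairwise_disjoint_map_cycleEdge_iff S).1 hdisj⟩, rfl⟩

end CycleGraph

theorem cycle_graph_matchings_count_general (n k : ℕ) (hn : 3 ≤ n) :
    Nat.card {s : Finset (Sym2 (Fin n)) //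
        (∀ e ∈ s, e ∈ (SimpleGraph.cycleGraph n).edgeSet) ∧
        (∀ e ∈ s, ∀ f ∈ s, e ≠ f → ∀ v, v ∈ e → v ∉ f) ∧
        s.card = k} = n * (n - k).choose k / (n - k) := by
  obtain ⟨m, rfl⟩ : ∃ m, n = m + 3 := ⟨n - 3, by omega⟩
  rw [card_matchings_cycleGraph, card_finset_fin_eq_card_cyclicSparseSubsets,
    card_cyclicSparseSubsets (by omega)]

/-- For `n ≥ 3` and `0 ≤ 2k ≤ n`, the number of matchings of the cycle graph on `n`
vertices with exactly `k` edges is `(n/(n-k))·C(n-k, k)`. -/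
theorem cycle_graph_matchings_count (n k : ℕ) (hn : 3 ≤ n) (hk : 2 * k ≤ n) :
    Nat.card {s : Finset (Sym2 (Fin n)) //
        (∀ e ∈ s, e ∈ (SimpleGraph.cycleGraph n).edgeSet) ∧
        (∀ e ∈ s, ∀ f ∈ s, e ≠ f → ∀ v, v ∈ e → v ∉ f) ∧
        s.card = k} = n * (n - k).choose k / (n - k) :=
  cycle_graph_matchings_count_general n k hn
end
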